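/- arXiv:2304.01459 — 6 statements merged into one kernel-verified Lean document; each statement's English description precedes it below -/
import Mathlib

section
/- Let G1 and G2 be torsion groups each having more than 2 elements. If the monoids of product-one sequences B(G1) and B(G2) are isomorphic as monoids, then the abelianizations G1/G1' and G2/G2' (quotients by the commutator subgroups) are isomorphic groups. -/
/-- A multiset `S` over a group `G` is a *product-one sequence* if its terms can be
ordered so that their product is `1`. -/
def IsProductOne {G : Type*} [Group G] (S : Multiset G) : Prop :=
  ∃ l : List G, (l : Multiset G) = S ∧ l.prod = 1

/-- The monoid `B(G)` of product-one sequences over `G`, as a submonoid of the free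
abelian monoid (finite multisets under addition) over `G`. -/
def ProductOneSubmonoid (G : Type*) [Group G] : AddSubmonoid (Multiset G) where
  carrier := {S | IsProductOne S}
  zero_mem' := ⟨[], rfl, rfl⟩
  add_mem' := by
    rintro a b ⟨l1, rfl, p1⟩ ⟨l2, rfl, p2⟩
    exact ⟨l1 ++ l2, by simp, by simp [p1, p2]⟩

/-!
Send a sequence to its multiplicity vector in the free abelian group `G →₀ ℤ`. The subgroup
`K_G` generated by `B(G)` is the kernel of the summation map `G →₀ ℤ → Gᵃᵇ`, so
`(G →₀ ℤ) ⧸ K_G ≃ Gᵃᵇ`, and `K_G` is the Grothendieck group of `B(G)`; hence `B(G₁) ≃ B(G₂)`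
induces `K_{G₁} ≃ K_{G₂}`. For torsion groups a nonnegative element of `K_G` has a multiple in
`B(G)`, so this isomorphism preserves the pointwise order.

When `|G| > 2`, every basis vector `δ_g` is the meet of two product-one sequences, and every
`v : G →₀ ℤ` is determined by the elements of `K_G` below it: `K_G` behaves like a divisor theory.
As for divisor theories, an order isomorphism `K_{G₁} ≃ K_{G₂}` then extends to an isomorphism
`G₁ →₀ ℤ ≃ G₂ →₀ ℤ` carrying `K_{G₁}` onto `K_{G₂}` (send `δ_a` to the meet of the image of a
finite set with meet `δ_a`), and the quotients `G₁ᵃᵇ`, `G₂ᵃᵇ` are isomorphic.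
-/

open Finsupp
open scoped Pointwise

theorem Finset.inf'_add_of_map_add {ι L : Type*} [DecidableEq ι] [Add ι] [AddCommGroup L]
    [Lattice L] [IsOrderedAddMonoid L] {f : ι → L} (hf : ∀ x y, f (x + y) = f x + f y)
    {s t : Finset ι} (hs : s.Nonempty) (ht : t.Nonempty) :
    (s + t).inf' (hs.add ht) f = s.inf' hs f + t.inf' ht f := by
  calc (s + t).inf' (hs.add ht) f
      = (s ×ˢ t).inf' (hs.product ht) (fun p => f p.1 + f p.2) := by
        simp_rw [Finset.add_def, Finset.inf'_image, Function.comp_def, hf]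
    _ = s.inf' hs (fun x => t.inf' ht (fun y => f x + f y)) := Finset.inf'_product_left _ _
    _ = s.inf' hs (fun x => f x + t.inf' ht f) := by
        congr 1 with x
        exact (map_finset_inf' (OrderIso.addLeft (f x)) ht f).symm
    _ = s.inf' hs f + t.inf' ht f := (map_finset_inf' (OrderIso.addRight _) hs f).symm

theorem Cardinal.exists_ne_ne_of_two_lt {α : Type*} (h : 2 < Cardinal.mk α) (x y : α) :
    ∃ z, z ≠ x ∧ z ≠ y :=
  Cardinal.exists_ne_ne_of_three_le (by exact_mod_cast Cardinal.natCast_add_one_le_iff.mpr h) x y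

theorem AddSubgroup.mem_closure_addSubmonoid_iff {A : Type*} [AddCommGroup A] (M : AddSubmonoid A)
    {x : A} : x ∈ AddSubgroup.closure (M : Set A) ↔ ∃ a ∈ M, ∃ b ∈ M, a - b = x := by
  constructor
  · intro hx
    induction hx using AddSubgroup.closure_induction with
    | mem x hx => exact ⟨x, hx, 0, M.zero_mem, sub_zero x⟩
    | zero => exact ⟨0, M.zero_mem, 0, M.zero_mem, sub_zero 0⟩
    | add x y _ _ hx hy =>
      obtain ⟨a, ha, b, hb, rfl⟩ := hx
      obtain ⟨c, hc, d, hd, rfl⟩ := hy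
      exact ⟨a + c, M.add_mem ha hc, b + d, M.add_mem hb hd, by abel⟩
    | neg x _ hx =>
      obtain ⟨a, ha, b, hb, rfl⟩ := hx
      exact ⟨b, hb, a, ha, (neg_sub a b).symm⟩
  · rintro ⟨a, ha, b, hb, rfl⟩
    exact sub_mem (AddSubgroup.subset_closure ha) (AddSubgroup.subset_closure hb)

theorem Finsupp.nonneg_of_nsmul_nonneg {α : Type*} {n : ℕ} (hn : 0 < n) {x : α →₀ ℤ}
    (h : 0 ≤ n • x) : 0 ≤ x := fun a => by
  have ha : 0 ≤ (n : ℤ) * x a := by simpa using h a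
  exact (mul_nonneg_iff_of_pos_left (by exact_mod_cast hn)).1 ha

theorem Finsupp.single_inf_single_add_single_eq_zero {α : Type*} {a b c : α} (hb : b ≠ a)
    (hc : c ≠ a) :
    single a (1 : ℤ) ⊓ (single b 1 + single c 1) = 0 := by
  classical
  ext k
  simp only [Finsupp.inf_apply, Finsupp.add_apply, Finsupp.single_apply, coe_zero, Pi.zero_apply]
  split_ifs <;> simp_all

theorem Abelianization.of_surjective {G : Type*} [Group G] :
    Function.Surjective (Abelianization.of : G → _) :=
  QuotientGroup.mk'_surjective _

theorem AddEquiv.map_le_map_iff_of_nonneg {A B : Type*} [AddCommGroup A] [PartialOrder A]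
    [IsOrderedAddMonoid A] [AddCommGroup B] [PartialOrder B] [IsOrderedAddMonoid B] (e : A ≃+ B)
    (he : ∀ a, 0 ≤ a → 0 ≤ e a) (he' : ∀ b, 0 ≤ b → 0 ≤ e.symm b) {a b : A} :
    e a ≤ e b ↔ a ≤ b := by
  rw [← sub_nonneg, ← map_sub, ← sub_nonneg (a := b)]
  exact ⟨fun h => by simpa using he' _ h, he _⟩

open scoped Classical in
noncomputable def Multiset.toIntFinsupp (α : Type*) : Multiset α →+ (α →₀ ℤ) :=
  (mapRange.addMonoidHom (Nat.castAddMonoidHom ℤ)).comp Multiset.toFinsupp.toAddMonoidHom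

namespace Multiset

variable {α : Type*}

theorem toIntFinsupp_singleton (a : α) : toIntFinsupp α {a} = single a 1 := by
  classical
  simp [toIntFinsupp, Multiset.toFinsupp_singleton]

theorem toIntFinsupp_coe (l : List α) :
    toIntFinsupp α l = (l.map fun a => single a (1 : ℤ)).sum := by
  induction l with
  | nil => simp
  | cons a l ih =>
    rw [← cons_coe, ← singleton_add, _root_.map_add, ih, toIntFinsupp_singleton]
    simp

theorem toIntFinsupp_injective : Function.Injective (toIntFinsupp α) := by
  classical
  simp only [toIntFinsupp, AddMonoidHom.coe_comp]
  exact (mapRange_injective _ Nat.cast_zero Nat.cast_injective).comp Multiset.toFinsupp.injective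

theorem toIntFinsupp_nonneg (S : Multiset α) : 0 ≤ toIntFinsupp α S := fun a => by
  classical
  simp [toIntFinsupp]

theorem exists_toIntFinsupp_eq {x : α →₀ ℤ} (hx : 0 ≤ x) : ∃ S, toIntFinsupp α S = x := by
  classical
  refine ⟨toMultiset (x.mapRange Int.toNat Int.toNat_zero), ?_⟩
  ext a
  simp [toIntFinsupp, Int.toNat_of_nonneg (hx a)]

end Multiset

namespace AddSubgroup

variable {α β : Type*}

/-- The subgroup analogue, inside the free abelian group `α →₀ ℤ`, of a divisor theory in the sense
of Geroldinger–Halter-Koch. -/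
structure IsDivisorTheory (K : AddSubgroup (α →₀ ℤ)) : Prop where
  le_of_forall_le : ∀ v w : α →₀ ℤ, (∀ z ∈ K, z ≤ v → z ≤ w) → v ≤ w
  exists_inf'_eq_single :
    ∀ a, ∃ (Y : Finset K) (hY : Y.Nonempty), Y.inf' hY Subtype.val = single a (1 : ℤ)

namespace IsDivisorTheory

variable {K₁ : AddSubgroup (α →₀ ℤ)} {K₂ : AddSubgroup (β →₀ ℤ)}

theorem eq_of_forall_le_iff (hK : K₁.IsDivisorTheory) {v w : α →₀ ℤ}
    (h : ∀ z ∈ K₁, z ≤ v ↔ z ≤ w) : v = w :=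
  le_antisymm (hK.le_of_forall_le v w fun z hz => (h z hz).1)
    (hK.le_of_forall_le w v fun z hz => (h z hz).2)

theorem le_inf'_map_iff (e : K₁ ≃+o K₂) {Y : Finset K₁} (hY : Y.Nonempty) (z : K₂) :
    (z : β →₀ ℤ) ≤ Y.inf' hY (Subtype.val ∘ e) ↔
      ((e.symm z : K₁) : α →₀ ℤ) ≤ Y.inf' hY Subtype.val := by
  simp only [Finset.le_inf'_iff, Subtype.coe_le_coe]
  exact forall₂_congr fun y _ => e.toOrderIso.symm_apply_le.symm

theorem inf'_map_eq_of_inf'_eq (hK₂ : K₂.IsDivisorTheory) (e : K₁ ≃+o K₂) {Y Z : Finset K₁}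
    (hY : Y.Nonempty) (hZ : Z.Nonempty) (h : Y.inf' hY Subtype.val = Z.inf' hZ Subtype.val) :
    Y.inf' hY (Subtype.val ∘ e) = Z.inf' hZ (Subtype.val ∘ e) :=
  hK₂.eq_of_forall_le_iff fun z hz => by
    rw [le_inf'_map_iff e hY ⟨z, hz⟩, le_inf'_map_iff e hZ ⟨z, hz⟩, h]

noncomputable def extend (hK₁ : K₁.IsDivisorTheory) (e : K₁ ≃+o K₂) :
    (α →₀ ℤ) →+ (β →₀ ℤ) :=
  liftAddHom fun a =>
    zmultiplesHom _ ((hK₁.exists_inf'_eq_single a).choose.inf'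
      (hK₁.exists_inf'_eq_single a).choose_spec.choose (Subtype.val ∘ e))

variable (hK₁ : K₁.IsDivisorTheory) (e : K₁ ≃+o K₂)

theorem exists_extend_single (a : α) : ∃ (Y : Finset K₁) (hY : Y.Nonempty),
    Y.inf' hY Subtype.val = single a 1 ∧
      hK₁.extend e (single a 1) = Y.inf' hY (Subtype.val ∘ e) :=
  ⟨_, _, (hK₁.exists_inf'_eq_single a).choose_spec.choose_spec, by simp [extend]⟩

theorem exists_inf'_sub_inf' (v : α →₀ ℤ) :
    ∃ (P Q : Finset K₁) (hP : P.Nonempty) (hQ : Q.Nonempty),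
    v = P.inf' hP Subtype.val - Q.inf' hQ Subtype.val ∧
      hK₁.extend e v = P.inf' hP (Subtype.val ∘ e) - Q.inf' hQ (Subtype.val ∘ e) := by
  classical
  have hcoe : ∀ x y : K₁, ((x + y : K₁) : α →₀ ℤ) = x + y := fun _ _ => rfl
  have he : ∀ x y : K₁, ((e (x + y) : K₂) : β →₀ ℤ) = e x + e y := fun x y => by simp
  let D : AddSubgroup (α →₀ ℤ) :=
    { carrier := {v | ∃ (P Q : Finset K₁) (hP : P.Nonempty) (hQ : Q.Nonempty),
        v = P.inf' hP Subtype.val - Q.inf' hQ Subtype.val ∧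
          hK₁.extend e v = P.inf' hP (Subtype.val ∘ e) - Q.inf' hQ (Subtype.val ∘ e)}
      zero_mem' := ⟨{0}, {0}, Finset.singleton_nonempty _, Finset.singleton_nonempty _, by simp⟩
      add_mem' := by
        rintro _ _ ⟨P, Q, hP, hQ, rfl, hv⟩ ⟨P', Q', hP', hQ', rfl, hw⟩
        refine ⟨P + P', Q + Q', hP.add hP', hQ.add hQ', ?_, ?_⟩
        · rw [Finset.inf'_add_of_map_add hcoe hP hP', Finset.inf'_add_of_map_add hcoe hQ hQ']
          abel
        · rw [map_add, hv, hw, Finset.inf'_add_of_map_add he hP hP',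
            Finset.inf'_add_of_map_add he hQ hQ']
          abel
      neg_mem' := by
        rintro _ ⟨P, Q, hP, hQ, rfl, hv⟩
        exact ⟨Q, P, hQ, hP, neg_sub _ _, by rw [map_neg, hv, neg_sub]⟩ }
  suffices v ∈ D from this
  induction v using Finsupp.induction_linear with
  | zero => exact D.zero_mem
  | add v w hv hw => exact D.add_mem hv hw
  | single a b =>
    rw [← smul_single_one]
    obtain ⟨Y, hY, hYa, hext⟩ := hK₁.exists_extend_single e a
    exact D.zsmul_mem ⟨Y, {0}, hY, Finset.singleton_nonempty _, by simp [hYa], by simp [hext]⟩ b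

theorem extend_inf' (hK₂ : K₂.IsDivisorTheory) {Y : Finset K₁} (hY : Y.Nonempty) :
    hK₁.extend e (Y.inf' hY Subtype.val) = Y.inf' hY (Subtype.val ∘ e) := by
  classical
  obtain ⟨P, Q, hP, hQ, hv, hext⟩ := hK₁.exists_inf'_sub_inf' e (Y.inf' hY Subtype.val)
  have hsum : (Y + Q).inf' (hY.add hQ) Subtype.val = P.inf' hP Subtype.val := by
    rw [Finset.inf'_add_of_map_add (fun _ _ => rfl) hY hQ, hv, sub_add_cancel]
  have hsum' := inf'_map_eq_of_inf'_eq hK₂ e _ _ hsum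
  rw [Finset.inf'_add_of_map_add (fun x y => by simp) hY hQ] at hsum'
  rw [hext, ← hsum', add_sub_cancel_right]

theorem extend_coe (hK₂ : K₂.IsDivisorTheory) (k : K₁) : hK₁.extend e k = e k := by
  simpa using hK₁.extend_inf' e hK₂ (Finset.singleton_nonempty k)

theorem extend_symm_comp_extend (hK₂ : K₂.IsDivisorTheory) :
    (hK₂.extend e.symm).comp (hK₁.extend e) = AddMonoidHom.id _ := by
  classical
  ext a : 1
  apply AddMonoidHom.ext_int
  obtain ⟨Y, hY, hYa, hext⟩ := hK₁.exists_extend_single e a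
  have hYe : Y.inf' hY (Subtype.val ∘ e) = (Y.image e).inf' (hY.image e) Subtype.val := by
    rw [Finset.inf'_image]
  simp only [AddMonoidHom.comp_apply, singleAddHom_apply, hext, hYe, AddMonoidHom.id_apply]
  rw [hK₂.extend_inf' e.symm hK₁, Finset.inf'_image, ← hYa]
  simp [Function.comp_def]

noncomputable def extendAddEquiv (hK₂ : K₂.IsDivisorTheory) : (α →₀ ℤ) ≃+ (β →₀ ℤ) :=
  AddMonoidHom.toAddEquiv (hK₁.extend e) (hK₂.extend e.symm) (hK₁.extend_symm_comp_extend e hK₂)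
    (by simpa using hK₂.extend_symm_comp_extend e.symm hK₁)

theorem map_extendAddEquiv (hK₂ : K₂.IsDivisorTheory) :
    K₁.map (hK₁.extendAddEquiv e hK₂ : (α →₀ ℤ) →+ (β →₀ ℤ)) = K₂ := by
  ext w
  constructor
  · rintro ⟨v, hv, rfl⟩
    exact (hK₁.extend_coe e hK₂ ⟨v, hv⟩).symm ▸ (e _).2
  · intro hw
    refine ⟨_, (e.symm ⟨w, hw⟩).2, ?_⟩
    exact (hK₁.extend_coe e hK₂ _).trans (by simp)

noncomputable def quotientAddEquiv (hK₂ : K₂.IsDivisorTheory) :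
    (α →₀ ℤ) ⧸ K₁ ≃+ (β →₀ ℤ) ⧸ K₂ :=
  QuotientAddGroup.congr K₁ K₂ (hK₁.extendAddEquiv e hK₂) (hK₁.map_extendAddEquiv e hK₂)

end IsDivisorTheory

end AddSubgroup

section ProductOne

variable {G : Type*} [Group G]

theorem isProductOne_coe {l : List G} (h : l.prod = 1) : IsProductOne (l : Multiset G) :=
  ⟨l, rfl, h⟩

theorem exists_nsmul_isProductOne (htor : ∀ g : G, IsOfFinOrder g) (S : Multiset G) :
    ∃ n : ℕ, 0 < n ∧ IsProductOne (n • S) := by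
  refine ⟨orderOf S.toList.prod, (htor _).orderOf_pos,
    (List.replicate (orderOf S.toList.prod) S.toList).flatten, ?_, ?_⟩
  · simp [← Multiset.coe_join, Multiset.join]
  · simp [List.prod_flatten, pow_orderOf_eq_one]

variable (G) in
noncomputable def productOneSpan : AddSubgroup (G →₀ ℤ) :=
  AddSubgroup.closure ((ProductOneSubmonoid G).map (Multiset.toIntFinsupp G))

variable (G) in
noncomputable def toAbelianization : (G →₀ ℤ) →+ Additive (Abelianization G) :=
  liftAddHom fun g => zmultiplesHom _ (.ofMul (.of g))

theorem mem_productOneSpan_iff_exists_sub {x : G →₀ ℤ} :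
    x ∈ productOneSpan G ↔ ∃ S, IsProductOne S ∧ ∃ T, IsProductOne T ∧
      Multiset.toIntFinsupp G S - Multiset.toIntFinsupp G T = x := by
  simp only [productOneSpan, AddSubgroup.mem_closure_addSubmonoid_iff, AddSubmonoid.mem_map,
    exists_exists_and_eq_and]
  rfl

theorem toIntFinsupp_mem_productOneSpan {S : Multiset G} (hS : IsProductOne S) :
    Multiset.toIntFinsupp G S ∈ productOneSpan G :=
  AddSubgroup.subset_closure ⟨S, hS, rfl⟩

theorem toAbelianization_single (g : G) :
    toAbelianization G (single g 1) = .ofMul (.of g) := by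
  simp [toAbelianization]

theorem toAbelianization_toIntFinsupp_coe (l : List G) :
    toAbelianization G (Multiset.toIntFinsupp G l) = .ofMul (.of l.prod) := by
  induction l with
  | nil => simp
  | cons g l ih =>
    rw [← Multiset.cons_coe, ← Multiset.singleton_add, map_add, map_add,
      Multiset.toIntFinsupp_singleton, toAbelianization_single, ih, List.prod_cons, map_mul,
      ofMul_mul]

theorem productOneSpan_le_ker : productOneSpan G ≤ (toAbelianization G).ker := by
  rw [productOneSpan, AddSubgroup.closure_le]
  rintro _ ⟨_, ⟨l, rfl, hl⟩, rfl⟩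
  simp [toAbelianization_toIntFinsupp_coe, hl]

theorem single_mul_sub_mem_productOneSpan (g h : G) :
    single (g * h) 1 - (single g 1 + single h 1) ∈ productOneSpan G := by
  refine mem_productOneSpan_iff_exists_sub.2 ⟨_, isProductOne_coe (l := [g * h, (g * h)⁻¹]) ?_,
    _, isProductOne_coe (l := [g, h, (g * h)⁻¹]) ?_, ?_⟩
  · simp
  · simp
  · simp only [Multiset.toIntFinsupp_coe, List.map_cons, List.map_nil, List.sum_cons,
      List.sum_nil]
    abel

variable (G) in
noncomputable def singleClass : G →* Multiplicative ((G →₀ ℤ) ⧸ productOneSpan G) where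
  toFun g := .ofAdd (single g 1 : G →₀ ℤ)
  map_one' := by
    rw [ofAdd_eq_one, QuotientAddGroup.eq_zero_iff, ← Multiset.toIntFinsupp_singleton]
    exact toIntFinsupp_mem_productOneSpan (isProductOne_coe (l := [1]) (by simp))
  map_mul' g h := by
    rw [← ofAdd_add, ← QuotientAddGroup.mk_add]
    exact congrArg _ (QuotientAddGroup.eq_iff_sub_mem.2 (single_mul_sub_mem_productOneSpan g h))

theorem mem_productOneSpan_iff {x : G →₀ ℤ} :
    x ∈ productOneSpan G ↔ toAbelianization G x = 0 := by
  refine ⟨fun hx => productOneSpan_le_ker hx, fun hx => ?_⟩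
  have hlift : (Abelianization.lift (singleClass G)).toAdditiveLeft.comp (toAbelianization G) =
      QuotientAddGroup.mk' _ := by
    ext g
    simp [toAbelianization_single, singleClass]
  rw [← QuotientAddGroup.eq_zero_iff, ← QuotientAddGroup.mk'_apply, ← hlift,
    AddMonoidHom.comp_apply, hx, map_zero]

theorem toAbelianization_surjective : Function.Surjective (toAbelianization G) := fun y => by
  obtain ⟨a, ha⟩ := Abelianization.of_surjective y.toMul
  exact ⟨single a 1, by rw [toAbelianization_single, ha]; rfl⟩

variable (G) in
noncomputable def quotientProductOneSpanEquiv :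
    (G →₀ ℤ) ⧸ productOneSpan G ≃+ Additive (Abelianization G) :=
  (QuotientAddGroup.quotientAddEquivOfEq (AddSubgroup.ext fun _ => mem_productOneSpan_iff)).trans
    (QuotientAddGroup.quotientKerEquivOfSurjective _ toAbelianization_surjective)

/-- The witness `z = v - δ_h - δ_{h⁻¹a}` lies in the span, lies below `v`, and agrees with `v`
at `g` once `h` avoids `g` and `a g⁻¹`, where `a` represents the class of `v` in `Gᵃᵇ`. -/
theorem productOneSpan_le_of_forall_le (hG : 2 < Cardinal.mk G) {v w : G →₀ ℤ}
    (h : ∀ z ∈ productOneSpan G, z ≤ v → z ≤ w) : v ≤ w := by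
  intro g
  obtain ⟨a, ha⟩ := Abelianization.of_surjective (toAbelianization G v).toMul
  obtain ⟨h₁, h₁g, h₁a⟩ := Cardinal.exists_ne_ne_of_two_lt hG g (a * g⁻¹)
  have h₂g : h₁⁻¹ * a ≠ g := fun hg => h₁a (by rw [← hg]; group)
  set z := v - (single h₁ 1 + single (h₁⁻¹ * a) 1)
  have hz : z ∈ productOneSpan G := by
    rw [mem_productOneSpan_iff, map_sub, map_add, toAbelianization_single, toAbelianization_single,
      ← ofMul_mul, ← map_mul, mul_inv_cancel_left, ha, ofMul_toMul, sub_self]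
  have hzv : z ≤ v :=
    sub_le_self _ (add_nonneg (single_nonneg.2 zero_le_one) (single_nonneg.2 zero_le_one))
  have hzg : z g = v g := by simp [z, single_eq_of_ne h₁g.symm, single_eq_of_ne h₂g.symm]
  exact hzg ▸ h z hz hzv g

/-- `δ_g = (δ_g + δ_{g⁻¹}) ⊓ (δ_g + δ_h + δ_{(gh)⁻¹})` for any `h ∉ {1, g⁻¹}`. -/
theorem exists_inf'_eq_single (hG : 2 < Cardinal.mk G) (g : G) :
    ∃ (Y : Finset (productOneSpan G)) (hY : Y.Nonempty),
      Y.inf' hY Subtype.val = single g (1 : ℤ) := by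
  classical
  obtain ⟨h, h1, hg⟩ := Cardinal.exists_ne_ne_of_two_lt hG 1 g⁻¹
  have hgh : (g * h)⁻¹ ≠ g⁻¹ := by simpa using h1
  let x₁ : productOneSpan G :=
    ⟨_, toIntFinsupp_mem_productOneSpan (isProductOne_coe (l := [g, g⁻¹]) (by simp))⟩
  let x₂ : productOneSpan G :=
    ⟨_, toIntFinsupp_mem_productOneSpan (isProductOne_coe (l := [g, h, (g * h)⁻¹]) (by simp))⟩
  refine ⟨{x₁, x₂}, Finset.insert_nonempty _ _, ?_⟩
  rw [Finset.inf'_insert (Finset.singleton_nonempty _), Finset.inf'_singleton]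
  simp only [x₁, x₂, Multiset.toIntFinsupp_coe, List.map_cons, List.map_nil, List.sum_cons,
    List.sum_nil, add_zero]
  rw [← add_inf, Finsupp.single_inf_single_add_single_eq_zero hg hgh, add_zero]

theorem isDivisorTheory_productOneSpan (hG : 2 < Cardinal.mk G) :
    (productOneSpan G).IsDivisorTheory :=
  ⟨fun _ _ => productOneSpan_le_of_forall_le hG, exists_inf'_eq_single hG⟩

theorem exists_nsmul_eq_toIntFinsupp (htor : ∀ g : G, IsOfFinOrder g) {x : G →₀ ℤ}
    (hx : 0 ≤ x) :
    ∃ n : ℕ, 0 < n ∧ ∃ S, IsProductOne S ∧ Multiset.toIntFinsupp G S = n • x := by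
  obtain ⟨S, rfl⟩ := Multiset.exists_toIntFinsupp_eq hx
  obtain ⟨n, hn, hS⟩ := exists_nsmul_isProductOne htor S
  exact ⟨n, hn, n • S, hS, map_nsmul _ n S⟩

variable (G) in
noncomputable def productOneLocalizationMap :
    (⊤ : AddSubmonoid (ProductOneSubmonoid G)).LocalizationMap (productOneSpan G) where
  toAddHom := (((Multiset.toIntFinsupp G).comp (ProductOneSubmonoid G).subtype).codRestrict _
    fun S => toIntFinsupp_mem_productOneSpan S.2).toAddHom
  isLocalizationMap := AddSubmonoid.isLocalizationMap_of_addGroup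
    (fun _ _ h => Subtype.ext (Multiset.toIntFinsupp_injective (congrArg Subtype.val h)))
    fun x => by
      obtain ⟨S, hS, T, hT, hx⟩ := mem_productOneSpan_iff_exists_sub.1 x.2
      exact ⟨⟨S, hS⟩, ⟨T, hT⟩, trivial, Subtype.ext hx.symm⟩

theorem nonneg_map_of_nonneg {G₁ G₂ F : Type*} [Group G₁] [Group G₂]
    [FunLike F (productOneSpan G₁) (productOneSpan G₂)]
    [AddMonoidHomClass F (productOneSpan G₁) (productOneSpan G₂)]
    (htor : ∀ g : G₁, IsOfFinOrder g) (f : F)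
    (hf : ∀ S, 0 ≤ f (productOneLocalizationMap G₁ S)) {k : productOneSpan G₁} (hk : 0 ≤ k) :
    0 ≤ f k := by
  obtain ⟨n, hn, S, hS, hSk⟩ := exists_nsmul_eq_toIntFinsupp htor hk
  have hnk : productOneLocalizationMap G₁ ⟨S, hS⟩ = n • k := Subtype.ext hSk
  have := hf ⟨S, hS⟩
  rw [hnk, map_nsmul] at this
  exact Finsupp.nonneg_of_nsmul_nonneg hn this

noncomputable def productOneSpanOrderAddIso {G₁ G₂ : Type*} [Group G₁] [Group G₂]
    (htor₁ : ∀ g : G₁, IsOfFinOrder g) (htor₂ : ∀ g : G₂, IsOfFinOrder g)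
    (θ : ProductOneSubmonoid G₁ ≃+ ProductOneSubmonoid G₂) :
    productOneSpan G₁ ≃+o productOneSpan G₂ :=
  let e := (productOneLocalizationMap G₁).addEquivOfAddEquiv (productOneLocalizationMap G₂)
    (j := θ) (by
      rw [← AddMonoidHom.mrange_eq_map]
      exact AddMonoidHom.mrange_eq_top_of_surjective _ θ.surjective)
  have he : ∀ S, e (productOneLocalizationMap G₁ S) = productOneLocalizationMap G₂ (θ S) :=
    AddSubmonoid.LocalizationMap.addEquivOfAddEquiv_eq _ _
  { e with
    map_le_map_iff' := e.map_le_map_iff_of_nonneg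
      (fun _ => nonneg_map_of_nonneg htor₁ e fun S => by
        rw [he]; exact Multiset.toIntFinsupp_nonneg _)
      (fun _ => nonneg_map_of_nonneg htor₂ e.symm fun T => by
        rw [e.symm_apply_eq.2 (by rw [he, θ.apply_symm_apply] :
          productOneLocalizationMap G₂ T = e (productOneLocalizationMap G₁ (θ.symm T)))]
        exact Multiset.toIntFinsupp_nonneg _) }

end ProductOne

theorem monoid_iso_implies_abelianization_iso (G1 G2 : Type*) [Group G1] [Group G2]
    (htor1 : ∀ g : G1, IsOfFinOrder g) (htor2 : ∀ g : G2, IsOfFinOrder g)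
    (hcard1 : 2 < Cardinal.mk G1) (hcard2 : 2 < Cardinal.mk G2)
    (h : Nonempty (ProductOneSubmonoid G1 ≃+ ProductOneSubmonoid G2)) :
    Nonempty (Abelianization G1 ≃* Abelianization G2) := by
  obtain ⟨θ⟩ := h
  have hK₁ := isDivisorTheory_productOneSpan hcard1
  have hK₂ := isDivisorTheory_productOneSpan hcard2
  let e := productOneSpanOrderAddIso htor1 htor2 θ
  exact ⟨MulEquiv.toAdditive.symm ((quotientProductOneSpanEquiv G1).symm.trans
    ((hK₁.quotientAddEquiv e hK₂).trans (quotientProductOneSpanEquiv G2)))⟩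
end

section
/- Let G1 be a torsion group, G2 a group, and φ : G1 → G2 a bijection such that a multiset over G1 is a product-one sequence over G1 if and only if its termwise image under φ is a product-one sequence over G2. Then for every g in G1, the order of φ(g) equals the order of g; in particular, G2 is a torsion group and φ maps the identity of G1 to the identity of G2. -/
theorem isProductOne_replicate_iff {G : Type*} [Group G] (n : ℕ) (g : G) :
    IsProductOne (Multiset.replicate n g) ↔ g ^ n = 1 := by
  constructor
  · rintro ⟨l, hl, hprod⟩
    rw [← Multiset.coe_replicate, Multiset.coe_eq_coe, List.perm_replicate] at hl
    rwa [hl, List.prod_replicate] at hprod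
  · intro hg
    exact ⟨List.replicate n g, Multiset.coe_replicate n g, by rw [List.prod_replicate, hg]⟩

theorem orderOf_eq_of_isProductOne_map_iff {G1 G2 : Type*} [Group G1] [Group G2] {φ : G1 → G2}
    (h : ∀ S : Multiset G1, IsProductOne S ↔ IsProductOne (S.map φ)) (g : G1) :
    orderOf (φ g) = orderOf g := by
  refine orderOf_eq_orderOf_iff.mpr fun n ↦ ?_
  rw [← isProductOne_replicate_iff, ← isProductOne_replicate_iff, ← Multiset.map_replicate]
  exact (h _).symm

theorem A1 (G1 G2 : Type*) [Group G1] [Group G2]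
    (htor : ∀ g : G1, IsOfFinOrder g) (φ : G1 → G2) (hbij : Function.Bijective φ)
    (h : ∀ S : Multiset G1, IsProductOne S ↔ IsProductOne (S.map φ)) :
    (∀ g : G1, orderOf (φ g) = orderOf g) ∧
      (∀ g2 : G2, IsOfFinOrder g2) ∧ φ 1 = 1 := by
  have hord := orderOf_eq_of_isProductOne_map_iff h
  refine ⟨hord, fun g2 ↦ ?_, ?_⟩
  · obtain ⟨g, rfl⟩ := hbij.surjective g2
    rw [← orderOf_pos_iff, hord, orderOf_pos_iff]
    exact htor g
  · rw [← orderOf_eq_one_iff, hord, orderOf_eq_one_iff]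
end

section
/- Let G1, G2 be groups and φ : G1 → G2 a bijection such that a multiset over G1 is a product-one sequence over G1 if and only if its termwise image under φ is a product-one sequence over G2. Then for every g in G1, φ(g⁻¹) = φ(g)⁻¹. -/
theorem A2 (G1 G2 : Type*) [Group G1] [Group G2]
    (φ : G1 → G2) (hbij : Function.Bijective φ)
    (h : ∀ S : Multiset G1, IsProductOne S ↔ IsProductOne (S.map φ)) :
    ∀ g : G1, φ g⁻¹ = (φ g)⁻¹ := by
  intro g
  have hp : IsProductOne ((({g, g⁻¹} : Multiset G1)).map φ) := by
    rw [← h]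
    exact ⟨[g, g⁻¹], rfl, by simp⟩
  obtain ⟨l, hl, hprod⟩ := hp
  have hl' : (l : Multiset G2) = {φ g, φ g⁻¹} := by simpa using hl
  have key : ∀ a b x y : G2, ({a, b} : Multiset G2) = {x, y} → (a = x ∧ b = y) ∨ (a = y ∧ b = x) := by
    intro a b x y hxy
    simp only [Multiset.insert_eq_cons, Multiset.cons_eq_cons] at hxy
    rcases hxy with ⟨rfl, h2⟩ | ⟨_, cs, h1, h2⟩
    · simp_all
    · simp [Multiset.singleton_eq_cons_iff] at h1 h2
      tauto
  match l, hl', hprod with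
  | [a, b], hl', hprod =>
    have hab : ({a, b} : Multiset G2) = {φ g, φ g⁻¹} := by rw [← hl']; rfl
    simp at hprod
    rcases key _ _ _ _ hab with ⟨rfl, rfl⟩ | ⟨rfl, rfl⟩
    · exact eq_inv_of_mul_eq_one_right hprod
    · exact eq_inv_of_mul_eq_one_left hprod
  | [], hl', _ => exact absurd hl' (by simp)
  | [a], hl', _ => exact absurd (congrArg Multiset.card hl') (by simp)
  | (a :: b :: c :: t), hl', _ => exact absurd (congrArg Multiset.card hl') (by simp)
end

section
/- Let G1, G2 be groups and φ : G1 → G2 a bijection such that a multiset over G1 is a product-one sequence over G1 if and only if its termwise image under φ is a product-one sequence over G2. Then for all g1, g2 in G1, either φ(g1 g2) = φ(g1) φ(g2) or φ(g1 g2) = φ(g2) φ(g1). -/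
/-!
Rotating a product-one ordering cyclically puts any prescribed term first, so `{a, b}` is
product-one iff `a * b = 1`, and `{c, a, b}` iff `c * a * b = 1` or `c * b * a = 1`.
Transporting `{g⁻¹, g}` through `φ` gives `φ g⁻¹ = (φ g)⁻¹`; transporting
`{(g₁ g₂)⁻¹, g₁, g₂}` then forces `φ (g₁ g₂)` to be `φ g₁ * φ g₂` or `φ g₂ * φ g₁`.
-/

section ProductOne

variable {G : Type*} [Group G]

theorem isProductOne_cons_iff (a : G) (S : Multiset G) :
    IsProductOne (a ::ₘ S) ↔ ∃ l : List G, (l : Multiset G) = S ∧ a * l.prod = 1 := by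
  constructor
  · rintro ⟨m, hm, hprod⟩
    have ha : a ∈ m := Multiset.mem_coe.1 (hm ▸ Multiset.mem_cons_self a S)
    obtain ⟨s, t, rfl⟩ := List.append_of_mem ha
    refine ⟨t ++ s, ?_, ?_⟩
    · have hmid : ((s ++ a :: t : List G) : Multiset G) = a ::ₘ (s ++ t : List G) :=
        Multiset.coe_eq_coe.2 List.perm_middle
      rw [Multiset.coe_eq_coe.2 List.perm_append_comm]
      exact (Multiset.cons_inj_right a).1 (hmid.symm.trans hm)
    · rw [List.prod_append, ← mul_assoc]
      rw [List.prod_append, List.prod_cons] at hprod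
      exact mul_eq_one_comm.1 hprod
  · rintro ⟨l, rfl, hl⟩
    exact ⟨a :: l, rfl, by rwa [List.prod_cons]⟩

theorem isProductOne_pair_iff (a b : G) : IsProductOne ({a, b} : Multiset G) ↔ a * b = 1 := by
  simp [Multiset.insert_eq_cons, isProductOne_cons_iff, Multiset.coe_eq_singleton]

theorem isProductOne_triple_iff (c a b : G) :
    IsProductOne ({c, a, b} : Multiset G) ↔ c * a * b = 1 ∨ c * b * a = 1 := by
  have hcoe (l : List G) : (l : Multiset G) = a ::ₘ {b} ↔ l = [a, b] ∨ l = [b, a] :=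
    Multiset.coe_eq_coe.trans List.perm_pair
  rw [Multiset.insert_eq_cons c, isProductOne_cons_iff]
  simp [hcoe, or_and_right, exists_or, mul_assoc]

end ProductOne

theorem A3_general (G1 G2 : Type*) [Group G1] [Group G2]
    (φ : G1 → G2)
    (h : ∀ S : Multiset G1, IsProductOne S ↔ IsProductOne (S.map φ)) :
    ∀ g1 g2 : G1, φ (g1 * g2) = φ g1 * φ g2 ∨ φ (g1 * g2) = φ g2 * φ g1 := by
  have φ_inv (g : G1) : φ g⁻¹ = (φ g)⁻¹ := by
    have hpair : IsProductOne ({φ g⁻¹, φ g} : Multiset G2) :=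
      (h {g⁻¹, g}).1 ((isProductOne_pair_iff _ _).2 (inv_mul_cancel g))
    exact eq_inv_of_mul_eq_one_left ((isProductOne_pair_iff _ _).1 hpair)
  intro g1 g2
  have htriple : IsProductOne ({φ (g1 * g2)⁻¹, φ g1, φ g2} : Multiset G2) :=
    (h {(g1 * g2)⁻¹, g1, g2}).1 ((isProductOne_triple_iff _ _ _).2 (Or.inl (by group)))
  rw [isProductOne_triple_iff, φ_inv] at htriple
  simpa only [mul_assoc, inv_mul_eq_one] using htriple

theorem A3 (G1 G2 : Type*) [Group G1] [Group G2]
    (φ : G1 → G2) (hbij : Function.Bijective φ)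
    (h : ∀ S : Multiset G1, IsProductOne S ↔ IsProductOne (S.map φ)) :
    ∀ g1 g2 : G1, φ (g1 * g2) = φ g1 * φ g2 ∨ φ (g1 * g2) = φ g2 * φ g1 :=
  A3_general G1 G2 φ h
end

section
/- Let G1, G2 be groups and φ : G1 → G2 a bijection such that a multiset over G1 is a product-one sequence over G1 if and only if its termwise image under φ is a product-one sequence over G2. Then for every g in G1 and every integer n, φ(gⁿ) = φ(g)ⁿ. -/
/-!
A sequence consisting of one term `x` and `n` copies of `c` is product-one exactly when
`x * c ^ n = 1`: every ordering has product `c ^ a * x * c ^ b` with `a + b = n`, a conjugate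
of `x * c ^ n`. Applying this to `g⁻ⁿ` followed by `n` copies of `g` gives `φ (g⁻ⁿ) = (φ g)⁻ⁿ`;
the case `n = 1` says `φ` commutes with inversion, and positive powers follow by writing
`gⁿ = (g⁻¹)⁻ⁿ`.
-/

theorem isProductOne_cons_replicate_iff {G : Type*} [Group G] (x c : G) (n : ℕ) :
    IsProductOne (x ::ₘ Multiset.replicate n c) ↔ x * c ^ n = 1 := by
  constructor
  · rintro ⟨l, hl, hprod⟩
    have hx : x ∈ l := Multiset.mem_coe.mp (hl ▸ Multiset.mem_cons_self x _)
    obtain ⟨l₁, l₂, rfl⟩ := List.append_of_mem hx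
    have hrest : l₁ ++ l₂ = List.replicate n c := by
      rw [← List.perm_replicate, ← Multiset.coe_eq_coe, Multiset.coe_replicate,
        ← Multiset.cons_inj_right x, ← hl]
      exact Multiset.coe_eq_coe.mpr List.perm_middle.symm
    obtain ⟨hlen, h₁, h₂⟩ := List.append_eq_replicate_iff.mp hrest
    rw [h₁, h₂, List.prod_append, List.prod_cons, List.prod_replicate, List.prod_replicate,
      mul_eq_one_comm, mul_assoc, ← pow_add] at hprod
    rwa [← hlen, add_comm]
  · intro h
    exact ⟨x :: List.replicate n c, rfl, by rw [List.prod_cons, List.prod_replicate, h]⟩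

section PreservesProductOne

variable {G H : Type*} [Group G] [Group H] {φ : G → H}
  (hφ : ∀ S : Multiset G, IsProductOne S → IsProductOne (S.map φ))
include hφ

theorem map_mul_pow_eq_one {x c : G} {n : ℕ} (h : x * c ^ n = 1) : φ x * φ c ^ n = 1 := by
  have := hφ _ ((isProductOne_cons_replicate_iff x c n).mpr h)
  rwa [Multiset.map_cons, Multiset.map_replicate, isProductOne_cons_replicate_iff] at this

theorem map_zpow_neg_natCast (g : G) (k : ℕ) : φ (g ^ (-k : ℤ)) = φ g ^ (-k : ℤ) := by
  have : φ (g ^ (-k : ℤ)) * φ g ^ k = 1 :=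
    map_mul_pow_eq_one hφ (by rw [zpow_neg, zpow_natCast, inv_mul_cancel])
  rw [zpow_neg (φ g), zpow_natCast]
  exact eq_inv_of_mul_eq_one_left this

end PreservesProductOne

theorem A3_powers_general (G1 G2 : Type*) [Group G1] [Group G2]
    (φ : G1 → G2)
    (h : ∀ S : Multiset G1, IsProductOne S ↔ IsProductOne (S.map φ)) :
    ∀ (g : G1) (n : ℤ), φ (g ^ n) = (φ g) ^ n := by
  have hφ := fun S => (h S).mp
  have map_inv (g : G1) : φ g⁻¹ = (φ g)⁻¹ := by simpa using map_zpow_neg_natCast hφ g 1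
  intro g n
  obtain ⟨k, rfl | rfl⟩ := Int.eq_nat_or_neg n
  · calc φ (g ^ (k : ℤ)) = φ (g⁻¹ ^ (-k : ℤ)) := by rw [inv_zpow', neg_neg]
      _ = φ g ^ (k : ℤ) := by rw [map_zpow_neg_natCast hφ, map_inv, inv_zpow', neg_neg]
  · exact map_zpow_neg_natCast hφ g k

theorem A3_powers (G1 G2 : Type*) [Group G1] [Group G2]
    (φ : G1 → G2) (hbij : Function.Bijective φ)
    (h : ∀ S : Multiset G1, IsProductOne S ↔ IsProductOne (S.map φ)) :
    ∀ (g : G1) (n : ℤ), φ (g ^ n) = (φ g) ^ n :=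
  A3_powers_general G1 G2 φ h
end

section
/- Let G1 be a torsion group, G2 a group, and φ : G1 → G2 a bijection such that a multiset over G1 is a product-one sequence over G1 if and only if its termwise image under φ is a product-one sequence over G2. Then for every g1 in G1, either φ(g1 x) = φ(x) φ(g1) for all x in G1, or φ(g1 x) = φ(g1) φ(x) for all x in G1. -/
open Function

section ProductOne

variable {G : Type*} [Group G]

theorem IsProductOne.exists_prod_cons_eq_one {a : G} {S : Multiset G}
    (h : IsProductOne (a ::ₘ S)) : ∃ l : List G, (l : Multiset G) = S ∧ a * l.prod = 1 := by
  obtain ⟨l, hl, hprod⟩ := h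
  obtain ⟨l₁, l₂, rfl⟩ := List.mem_iff_append.mp (Multiset.mem_coe.mp (hl ▸ S.mem_cons_self a))
  have hrot : (l₁ ++ a :: l₂).rotate l₁.length = a :: (l₂ ++ l₁) := List.rotate_append_length_eq ..
  refine ⟨l₂ ++ l₁, (Multiset.cons_inj_right a).mp ?_, ?_⟩
  · rw [← hl, Multiset.cons_coe, Multiset.coe_eq_coe, ← hrot]
    exact List.rotate_perm ..
  · simpa [hrot] using List.prod_rotate_eq_one_of_prod_eq_one hprod l₁.length

theorem IsProductOne.mul_eq_one_of_pair {a b : G} (h : IsProductOne {a, b}) : a * b = 1 := by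
  obtain ⟨l, hl, hprod⟩ := h.exists_prod_cons_eq_one
  simpa [Multiset.coe_eq_singleton.mp hl] using hprod

theorem IsProductOne.mul_eq_one_of_triple {a b c : G} (h : IsProductOne {a, b, c}) :
    a * (b * c) = 1 ∨ a * (c * b) = 1 := by
  obtain ⟨l, hl, hprod⟩ := h.exists_prod_cons_eq_one
  rcases List.perm_pair.mp (Multiset.coe_eq_coe.mp hl) with rfl | rfl <;> simp_all

end ProductOne

/-- Half-homomorphisms in the sense of W. R. Scott (1957). -/
def IsHalfHom {G K : Type*} [Mul G] [Mul K] (f : G → K) : Prop :=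
  ∀ a b, f (a * b) = f a * f b ∨ f (a * b) = f b * f a

namespace IsHalfHom

variable {G K : Type*} [Group G] [Group K]

theorem of_isProductOne_map {f : G → K}
    (hf : ∀ S : Multiset G, IsProductOne S → IsProductOne (S.map f)) : IsHalfHom f := by
  have map_inv (a : G) : f a⁻¹ = (f a)⁻¹ := by
    have h := hf {a, a⁻¹} ⟨[a, a⁻¹], rfl, by simp⟩
    exact eq_inv_of_mul_eq_one_right (IsProductOne.mul_eq_one_of_pair (by simpa using h))
  intro a b
  have h := hf {a, b, (a * b)⁻¹} ⟨[a, b, (a * b)⁻¹], rfl, by simp⟩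
  rcases IsProductOne.mul_eq_one_of_triple (c := (f (a * b))⁻¹) (by
      simpa only [Multiset.insert_eq_cons, Multiset.map_cons, Multiset.map_singleton, map_inv]
        using h) with h | h
  · exact .inl (by rw [← mul_assoc, mul_inv_eq_one] at h; exact h.symm)
  · refine .inr (inv_injective ?_)
    rw [mul_inv_rev, ← eq_inv_of_mul_eq_one_right h, mul_inv_cancel_right]

variable {f : G → K}

theorem map_mul_of_commute (hf : IsHalfHom f) {a b : G} (h : Commute (f a) (f b)) :
    f (a * b) = f a * f b :=
  (hf a b).elim id (·.trans h.eq.symm)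

theorem commute_of_commute_map (hf : IsHalfHom f) (hinj : Injective f) {a b : G}
    (h : Commute (f a) (f b)) : Commute a b :=
  hinj (by rw [hf.map_mul_of_commute h, hf.map_mul_of_commute h.symm, h.eq])

theorem map_mul_mul_ne_of_map_mul_ne (hf : IsHalfHom f) {g p : G} (hp : f (g * p) ≠ f p * f g) :
    f (g * (g * p)) ≠ f (g * p) * f g := by
  have hgp : f (g * p) = f g * f p := (hf g p).resolve_right hp
  have hps : f g * f p ≠ f p * f g := fun h => hp (hgp.trans h)
  have hgg : f (g * g) = f g * f g := (hf g g).elim id id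
  intro h
  rw [hgp, ← mul_assoc] at h
  rcases hf (g * g) p with h' | h' <;> rw [hgg, h] at h'
  · simp only [mul_assoc, mul_right_inj] at h'
    exact hps h'.symm
  · simp only [← mul_assoc, mul_left_inj] at h'
    exact hps h'

section
variable (hf : IsHalfHom f) (hinj : Injective f)
  (hcomm : ∀ {a b}, Commute a b → Commute (f a) (f b))
include hf hinj hcomm

theorem map_mul_swap_of_map_mul_ne {g q : G} (hq : f (g * q) ≠ f g * f q) :
    f (q * g) = f g * f q :=
  (hf q g).resolve_left fun h => hq <| hf.map_mul_of_commute <|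
    hcomm (hinj (h.trans ((hf g q).resolve_left hq).symm)).symm

theorem map_mul_mul_of_map_mul_ne {g p q : G} (hp : f (g * p) ≠ f p * f g)
    (hq : f (g * q) ≠ f g * f q) : f (q * (g * p)) = f g * f p * f q := by
  have hgp : f (g * p) = f g * f p := (hf g p).resolve_right hp
  have hgq : f (g * q) = f q * f g := (hf g q).resolve_left hq
  have hps : f g * f p ≠ f p * f g := fun h => hp (hgp.trans h)
  have hqs : f g * f q ≠ f q * f g := fun h => hq (hgq.trans h.symm)
  have hqg : f (q * g) = f g * f q := hf.map_mul_swap_of_map_mul_ne hinj hcomm hq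
  refine (hf q (g * p)).elim (fun hX => ?_) (by rw [hgp]; exact id)
  rw [hgp] at hX
  exfalso
  rcases hf (q * g) p with h | hXA
  · rw [hqg, mul_assoc, hX] at h
    simp only [← mul_assoc, mul_left_inj] at h
    exact hqs h.symm
  rw [hqg, mul_assoc, hX] at hXA
  -- now `f q * f g * f p = f p * f g * f q`; expanding `f (g * q * (g * p))` in two ways refutes it
  have hY₁ := hf g (q * (g * p))
  have hY₂ := hf (g * q) (g * p)
  rw [mul_assoc, hgq, hgp] at hY₂
  rw [hX] at hY₁
  rcases hY₁ with h₁ | h₁ <;> rcases hY₂ with h₂ | h₂ <;> have h := h₁.symm.trans h₂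
  · simp only [← mul_assoc, mul_left_inj] at h
    exact hqs h
  · simp only [mul_assoc, mul_right_inj] at h
    exact hqs (mul_left_cancel (hXA.symm.trans h))
  · simp only [mul_assoc, mul_right_inj] at h
    exact hps h.symm
  · simp only [← mul_assoc, mul_left_inj] at h hXA
    exact hps (mul_right_cancel (hXA.symm.trans h)).symm

theorem commute_of_map_mul_ne {g p q : G} (hp : f (g * p) ≠ f p * f g)
    (hq : f (g * q) ≠ f g * f q) : Commute (f p) (f q) := by
  have hX := hf.map_mul_mul_of_map_mul_ne hinj hcomm hp hq
  have hgp : f (g * p) = f g * f p := (hf g p).resolve_right hp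
  rcases hf (q * g) p with h | h <;>
    rw [mul_assoc, hX, hf.map_mul_swap_of_map_mul_ne hinj hcomm hq] at h
  · simp only [mul_assoc, mul_right_inj] at h
    exact h
  · simp only [← mul_assoc, mul_left_inj] at h
    exact absurd (hgp.trans h) hp

theorem anti_or_hom_at (g : G) :
    (∀ x, f (g * x) = f x * f g) ∨ (∀ x, f (g * x) = f g * f x) := by
  by_contra! ⟨⟨p, hp⟩, ⟨q, hq⟩⟩
  have hpq : Commute p q :=
    hf.commute_of_commute_map hinj (hf.commute_of_map_mul_ne hinj hcomm hp hq)
  have hgpq : Commute (g * p) q := hf.commute_of_commute_map hinj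
    (hf.commute_of_map_mul_ne hinj hcomm (hf.map_mul_mul_ne_of_map_mul_ne hp) hq)
  have hgq : Commute g q := by simpa using hgpq.mul_left hpq.inv_left
  exact hq (hf.map_mul_of_commute (hcomm hgq))

end
end IsHalfHom

theorem A7_pointwise_general (G1 G2 : Type*) [Group G1] [Group G2]
    (φ : G1 → G2) (hbij : Function.Bijective φ)
    (h : ∀ S : Multiset G1, IsProductOne S ↔ IsProductOne (S.map φ)) :
    ∀ g1 : G1, (∀ x : G1, φ (g1 * x) = φ x * φ g1) ∨
      (∀ x : G1, φ (g1 * x) = φ g1 * φ x) := by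
  let e := Equiv.ofBijective φ hbij
  have hφ : IsHalfHom φ := .of_isProductOne_map fun S => (h S).1
  have he : IsHalfHom e.symm := .of_isProductOne_map fun T hT =>
    (h _).2 <| by
      simpa [Multiset.map_map, Function.comp_def, e, Equiv.ofBijective_apply_symm_apply] using hT
  have hcomm {a b : G1} (hab : Commute a b) : Commute (φ a) (φ b) :=
    he.commute_of_commute_map e.symm.injective (by simpa [e] using hab)
  exact hφ.anti_or_hom_at hbij.injective hcomm

theorem A7_pointwise (G1 G2 : Type*) [Group G1] [Group G2]
    (htor : ∀ g : G1, IsOfFinOrder g) (φ : G1 → G2) (hbij : Function.Bijective φ)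
    (h : ∀ S : Multiset G1, IsProductOne S ↔ IsProductOne (S.map φ)) :
    ∀ g1 : G1, (∀ x : G1, φ (g1 * x) = φ x * φ g1) ∨
      (∀ x : G1, φ (g1 * x) = φ g1 * φ x) :=
  A7_pointwise_general G1 G2 φ hbij h
end
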